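/- arXiv:2508.05302 — 2 statements merged into one kernel-verified Lean document; each statement's English description precedes it below -/
import Mathlib

section
/- Let f be L-smooth with minimum f*, let 0 < η < 2/L, and suppose at each step θ_{t+1} = θ_t − η·g_t where E[g_t | θ_t] = ∇f(θ_t) and E[‖g_t − ∇f(θ_t)‖² | θ_t] ≤ σ²/b. Then for all T ≥ 1: min_{0 ≤ t < T} E[‖∇f(θ_t)‖²] ≤ 2(f(θ_0) − f*)/((2 − Lη)·η·T) + L·η·σ²/((2 − Lη)·b). -/
open MeasureTheory Finset

lemma descent_lemma {d : ℕ} {L : ℝ} (hL : 0 ≤ L) (f : EuclideanSpace ℝ (Fin d) → ℝ)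
    (hf : Differentiable ℝ f)
    (hlip : ∀ x y, ‖gradient f x - gradient f y‖ ≤ L * ‖x - y‖) (x y : EuclideanSpace ℝ (Fin d)) :
    f y ≤ f x + inner ℝ (gradient f x) (y - x) + L / 2 * ‖y - x‖ ^ 2 := by
  set v := y - x with hv
  set c : ℝ → EuclideanSpace ℝ (Fin d) := fun t => x + t • v with hc
  have hcderiv : ∀ t : ℝ, HasDerivAt c v t := by
    intro t
    have h1 : HasDerivAt (fun s : ℝ => s • v) ((1:ℝ) • v) t := (hasDerivAt_id t).smul_const v
    rw [one_smul] at h1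
    exact h1.const_add x
  have hφ : ∀ t : ℝ, HasDerivAt (fun s => f (c s)) (inner ℝ (gradient f (c t)) v : ℝ) t := by
    intro t
    have hg : HasGradientAt f (gradient f (c t)) (c t) := (hf (c t)).hasGradientAt
    have hfd : HasFDerivAt f (InnerProductSpace.toDual ℝ _ (gradient f (c t))) (c t) :=
      hasGradientAt_iff_hasFDerivAt.mp hg
    have := hfd.comp_hasDerivAt t (hcderiv t)
    simp at this ⊢
    exact this
  set ψ : ℝ → ℝ := fun t => f x + t * inner ℝ (gradient f x) v + L / 2 * t ^ 2 * ‖v‖ ^ 2 - f (c t)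
    with hψ
  have hψ' : ∀ t : ℝ, HasDerivAt ψ
      (inner ℝ (gradient f x) v + L * t * ‖v‖ ^ 2 - inner ℝ (gradient f (c t)) v) t := by
    intro t
    have h1 : HasDerivAt (fun s : ℝ => f x + s * inner ℝ (gradient f x) v
        + L / 2 * s ^ 2 * ‖v‖ ^ 2)
        (inner ℝ (gradient f x) v + L * t * ‖v‖ ^ 2) t := by
      have ha : HasDerivAt (fun s : ℝ => s * (inner ℝ (gradient f x) v : ℝ))
          (inner ℝ (gradient f x) v : ℝ) t := by
        simpa using (hasDerivAt_id t).mul_const (inner ℝ (gradient f x) v : ℝ)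
      have hb : HasDerivAt (fun s : ℝ => L / 2 * s ^ 2 * ‖v‖ ^ 2)
          (L * t * ‖v‖ ^ 2) t := by
        have : HasDerivAt (fun s : ℝ => s ^ 2) (2 * t) t := by
          simpa using hasDerivAt_pow 2 t
        have := (this.const_mul (L / 2)).mul_const (‖v‖ ^ 2)
        exact this.congr_deriv (by ring)
      exact (ha.const_add (f x)).add hb
    exact h1.sub (hφ t)
  have hψmono : ψ 0 ≤ ψ 1 := by
    have hmono : MonotoneOn ψ (Set.Icc (0:ℝ) 1) := by
      apply monotoneOn_of_deriv_nonneg (convex_Icc 0 1)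
      · exact fun t _ => ((hψ' t).continuousAt).continuousWithinAt
      · intro t ht
        exact ((hψ' t).differentiableAt).differentiableWithinAt
      · intro t ht
        rw [interior_Icc] at ht
        rw [(hψ' t).deriv]
        have hnorm : ‖c t - x‖ = t * ‖v‖ := by
          rw [hc]
          simp [norm_smul, abs_of_nonneg ht.1.le]
        have h2 : (inner ℝ (gradient f (c t)) v : ℝ) - inner ℝ (gradient f x) v
            ≤ L * t * ‖v‖ ^ 2 := by
          have := real_inner_le_norm (gradient f (c t) - gradient f x) v
          rw [inner_sub_left] at this
          calc (inner ℝ (gradient f (c t)) v : ℝ) - inner ℝ (gradient f x) v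
              ≤ ‖gradient f (c t) - gradient f x‖ * ‖v‖ := this
            _ ≤ (L * ‖c t - x‖) * ‖v‖ := by
                have := hlip (c t) x
                nlinarith [norm_nonneg v]
            _ = L * t * ‖v‖ ^ 2 := by rw [hnorm]; ring
        linarith
    have h0 : (0:ℝ) ∈ Set.Icc (0:ℝ) 1 := by norm_num
    have h1 : (1:ℝ) ∈ Set.Icc (0:ℝ) 1 := by norm_num
    exact hmono h0 h1 zero_le_one
  have hc0 : c 0 = x := by simp [hc]
  have hc1 : c 1 = y := by simp [hc, hv]
  simp only [hψ, hc0, hc1] at hψmono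
  nlinarith [hψmono]

lemma condexp_comp_clm {Ω : Type*} {m m0 : MeasurableSpace Ω} (hm : m ≤ m0) {μ : Measure Ω}
    [SigmaFinite (μ.trim hm)]
    {E F : Type*} [NormedAddCommGroup E] [NormedSpace ℝ E] [CompleteSpace E]
    [NormedAddCommGroup F] [NormedSpace ℝ F] [CompleteSpace F]
    (T : E →L[ℝ] F) {f : Ω → E} (hf : Integrable f μ) :
    condExp m μ (fun ω => T (f ω)) =ᵐ[μ] fun ω => T ((μ[f|m]) ω) := by
  refine (ae_eq_condExp_of_forall_setIntegral_eq hm (T.integrable_comp hf) ?_ ?_ ?_).symm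
  · intro s _ _
    exact (T.integrable_comp integrable_condExp).integrableOn
  · intro s hs hμs
    have h1 : ∫ ω in s, T ((μ[f|m]) ω) ∂μ = T (∫ ω in s, (μ[f|m]) ω ∂μ) :=
      T.integral_comp_comm integrable_condExp.integrableOn
    have h2 : ∫ ω in s, T (f ω) ∂μ = T (∫ ω in s, f ω ∂μ) :=
      T.integral_comp_comm hf.integrableOn
    rw [h1, h2, setIntegral_condExp hm hf hs]
  · exact StronglyMeasurable.aestronglyMeasurable
      (T.continuous.comp_stronglyMeasurable (stronglyMeasurable_condExp (m := m)))

set_option maxHeartbeats 1000000 in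
/-- Mini-batch SGD with constant batch size `b` and constant learning rate `η ∈ (0, 2/L)` on an
`L`-smooth function `f` bounded below by `f*`: if `θ_{t+1} = θ_t − η·g_t` with
`𝔼[g_t | θ_t] = ∇f(θ_t)` and `𝔼[‖g_t − ∇f(θ_t)‖² | θ_t] ≤ σ²/b`, then for all `T ≥ 1`,
`min_{t<T} 𝔼[‖∇f(θ_t)‖²] ≤ 2(f(θ_0) − f*)/((2 − Lη)ηT) + Lησ²/((2 − Lη)b)`. -/
theorem sgd_constant_bs_lr_convergence {d : ℕ}
    {Ω : Type*} [MeasureSpace Ω] (μ : Measure Ω) [IsProbabilityMeasure μ]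
    (L η σ b fstar : ℝ) (hL : 0 < L) (hη : 0 < η) (hη2 : η < 2 / L) (hb : 1 ≤ b)
    (f : EuclideanSpace ℝ (Fin d) → ℝ) (hf : Differentiable ℝ f)
    (hlip : ∀ x y, ‖gradient f x - gradient f y‖ ≤ L * ‖x - y‖)
    (hfstar : ∀ x, fstar ≤ f x)
    (θ g : ℕ → Ω → EuclideanSpace ℝ (Fin d))
    (hθmeas : ∀ t, Measurable (θ t)) (hgmeas : ∀ t, Measurable (g t))
    (θ0 : EuclideanSpace ℝ (Fin d)) (hθ0 : ∀ ω, θ 0 ω = θ0)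
    (hupdate : ∀ t ω, θ (t + 1) ω = θ t ω - η • g t ω)
    (hgL2 : ∀ t, MemLp (g t) 2 μ)
    (hfint : ∀ t, Integrable (fun ω => f (θ t ω)) μ)
    (hgradint : ∀ t, Integrable (fun ω => ‖gradient f (θ t ω)‖ ^ 2) μ)
    (hmean : ∀ t,
      μ[g t | MeasurableSpace.comap (θ t) inferInstance] =ᵐ[μ]
        fun ω => gradient f (θ t ω))
    (hvar : ∀ t,
      μ[(fun ω => ‖g t ω - gradient f (θ t ω)‖ ^ 2) |
          MeasurableSpace.comap (θ t) inferInstance] ≤ᵐ[μ]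
        fun _ => σ ^ 2 / b) :
    ∀ T : ℕ, ∀ _hT : 1 ≤ T,
      (range T).inf' (nonempty_range_iff.mpr (by omega))
          (fun t => ∫ ω, ‖gradient f (θ t ω)‖ ^ 2 ∂μ) ≤
        2 * (f θ0 - fstar) / ((2 - L * η) * η * T) + L * η * σ ^ 2 / ((2 - L * η) * b) := by
  intro T hT
  have hLη : L * η < 2 := by
    have := (lt_div_iff₀ hL).mp hη2
    nlinarith
  have h2Lη : 0 < 2 - L * η := by linarith
  have hb0 : (0 : ℝ) < b := lt_of_lt_of_le one_pos hb
  set a : ℕ → Ω → EuclideanSpace ℝ (Fin d) := fun t ω => gradient f (θ t ω) with ha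
  -- Lipschitz gradient
  have hglip : LipschitzWith (Real.toNNReal L) (gradient f) := by
    apply LipschitzWith.of_dist_le_mul
    intro x y
    rw [dist_eq_norm, dist_eq_norm, Real.coe_toNNReal _ hL.le]
    exact hlip x y
  have hgcont : Continuous (gradient f) := hglip.continuous
  have hameas : ∀ t, Measurable (a t) := fun t => (hgcont.measurable).comp (hθmeas t)
  have haL2 : ∀ t, MemLp (a t) 2 μ := fun t =>
    (memLp_two_iff_integrable_sq_norm (hameas t).aestronglyMeasurable).2 (hgradint t)
  set m : ℕ → MeasurableSpace Ω := fun t => MeasurableSpace.comap (θ t) inferInstance with hmdef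
  have hm : ∀ t, m t ≤ (inferInstance : MeasurableSpace Ω) := fun t => (hθmeas t).comap_le
  have hθm : ∀ t, Measurable[m t] (θ t) := fun t => Measurable.of_comap_le le_rfl
  have ham : ∀ t, StronglyMeasurable[m t] (a t) := fun t =>
    (Measurable.comp hgcont.measurable (hθm t)).stronglyMeasurable
  have hgint1 : ∀ t, Integrable (g t) μ := fun t => (hgL2 t).integrable one_le_two
  have hdiffL2 : ∀ t, MemLp (fun ω => g t ω - a t ω) 2 μ := fun t => (hgL2 t).sub (haL2 t)
  have hvarint : ∀ t, Integrable (fun ω => ‖g t ω - a t ω‖ ^ 2) μ := fun t =>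
    (memLp_two_iff_integrable_sq_norm (hdiffL2 t).aestronglyMeasurable).1 (hdiffL2 t)
  -- coordinate bounds
  have hcoord : ∀ (x : EuclideanSpace ℝ (Fin d)) (i : Fin d), |x i| ≤ ‖x‖ := by
    intro x i
    rw [EuclideanSpace.norm_eq]
    have h1 : |x i| = Real.sqrt (|x i| ^ 2) := by
      rw [Real.sqrt_sq_eq_abs, abs_abs]
    rw [h1]
    apply Real.sqrt_le_sqrt
    have : |x i| ^ 2 = ‖x i‖ ^ 2 := by rw [Real.norm_eq_abs]
    rw [this]
    exact Finset.single_le_sum (fun j _ => sq_nonneg ‖x j‖) (Finset.mem_univ i)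
  have haiL2 : ∀ t i, MemLp (fun ω => a t ω i) 2 μ := by
    intro t i
    refine MemLp.of_le (haL2 t) ?_ ?_
    · exact (((EuclideanSpace.proj i).continuous.measurable).comp (hameas t)).aestronglyMeasurable
    · filter_upwards with ω
      rw [Real.norm_eq_abs]
      exact hcoord (a t ω) i
  have hgiL2 : ∀ t i, MemLp (fun ω => g t ω i) 2 μ := by
    intro t i
    refine MemLp.of_le (hgL2 t) ?_ ?_
    · exact (((EuclideanSpace.proj i).continuous.measurable).comp (hgmeas t)).aestronglyMeasurable
    · filter_upwards with ω
      rw [Real.norm_eq_abs]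
      exact hcoord (g t ω) i
  have hgiint : ∀ t i, Integrable (fun ω => g t ω i) μ := fun t i =>
    (hgiL2 t i).integrable one_le_two
  have hprodint : ∀ t i, Integrable (fun ω => a t ω i * g t ω i) μ := by
    intro t i
    have hmul : MemLp ((fun ω => a t ω i) • (fun ω => g t ω i)) 1 μ :=
      MemLp.smul (hgiL2 t i) (haiL2 t i) (hpqr := ⟨by rw [inv_one]; exact ENNReal.inv_two_add_inv_two⟩)
    rw [memLp_one_iff_integrable] at hmul
    exact hmul
  -- inner product as a sum
  have hinner_sum : ∀ t, (fun ω => (inner ℝ (a t ω) (g t ω) : ℝ)) =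
      fun ω => ∑ i : Fin d, a t ω i * g t ω i := by
    intro t
    funext ω
    simp [PiLp.inner_apply, RCLike.inner_apply, mul_comm]
  have hinner_int : ∀ t, Integrable (fun ω => (inner ℝ (a t ω) (g t ω) : ℝ)) μ := by
    intro t
    rw [hinner_sum t]
    exact integrable_finset_sum _ (fun i _ => hprodint t i)
  have hasqint : ∀ t, Integrable (fun ω => ‖a t ω‖ ^ 2) μ := fun t => hgradint t
  -- key conditional expectation computation
  have hkey : ∀ t, μ[(fun ω => (inner ℝ (a t ω) (g t ω) : ℝ)) | m t] =ᵐ[μ]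
      fun ω => ‖a t ω‖ ^ 2 := by
    intro t
    have hsm : ∀ i : Fin d, StronglyMeasurable[m t] (fun ω => a t ω i) := by
      intro i
      exact (Measurable.comp (EuclideanSpace.proj i).continuous.measurable
        (Measurable.comp hgcont.measurable (hθm t))).stronglyMeasurable
    have hgicond : ∀ i : Fin d,
        μ[(fun ω => g t ω i) | m t] =ᵐ[μ] fun ω => a t ω i := by
      intro i
      have h1 := condexp_comp_clm (hm t) (EuclideanSpace.proj i) (hgint1 t)
      have h2 : μ[(fun ω => g t ω i) | m t]
          =ᵐ[μ] fun ω => (μ[g t | m t]) ω i := h1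
      refine h2.trans ?_
      filter_upwards [hmean t] with ω hω
      rw [hω]
    have hi : ∀ i : Fin d, μ[(fun ω => a t ω i * g t ω i) | m t] =ᵐ[μ]
        fun ω => a t ω i * a t ω i := by
      intro i
      have h1 : μ[(fun ω => a t ω i) * (fun ω => g t ω i) | m t] =ᵐ[μ]
          (fun ω => a t ω i) * μ[(fun ω => g t ω i) | m t] :=
        condExp_mul_of_stronglyMeasurable_left (hsm i) (hprodint t i) (hgiint t i)
      refine h1.trans ?_
      filter_upwards [hgicond i] with ω hω
      simp only [Pi.mul_apply, hω]
    have hsum := condExp_finsetSum (μ := μ) (m := m t)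
      (s := Finset.univ) (f := fun i (ω : Ω) => a t ω i * g t ω i)
      (fun i _ => hprodint t i)
    rw [hinner_sum t,
      show (fun ω => ∑ i : Fin d, a t ω i * g t ω i)
          = ∑ i : Fin d, (fun ω => a t ω i * g t ω i) from by
        funext ω; simp]
    refine hsum.trans ?_
    have hall : ∀ᵐ ω ∂μ, ∀ i : Fin d, (μ[(fun ω => a t ω i * g t ω i) | m t]) ω
        = a t ω i * a t ω i := by
      rw [ae_all_iff]
      exact fun i => hi i
    filter_upwards [hall] with ω hω
    rw [Finset.sum_apply]
    have : ∑ i : Fin d, (μ[(fun ω => a t ω i * g t ω i) | m t]) ω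
        = ∑ i : Fin d, a t ω i * a t ω i := Finset.sum_congr rfl (fun i _ => hω i)
    rw [this, ← real_inner_self_eq_norm_sq]
    simp [PiLp.inner_apply, RCLike.inner_apply, -real_inner_self_eq_norm_sq]
    rw [EuclideanSpace.norm_sq_eq]
    simp [sq]
  have hEinner : ∀ t, ∫ ω, (inner ℝ (a t ω) (g t ω) : ℝ) ∂μ = ∫ ω, ‖a t ω‖ ^ 2 ∂μ := by
    intro t
    rw [← integral_condExp (hm t) (f := fun ω => (inner ℝ (a t ω) (g t ω) : ℝ))]
    exact integral_congr_ae (hkey t)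
  have hEvar : ∀ t, ∫ ω, ‖g t ω - a t ω‖ ^ 2 ∂μ ≤ σ ^ 2 / b := by
    intro t
    rw [← integral_condExp (hm t) (f := fun ω => ‖g t ω - a t ω‖ ^ 2)]
    calc ∫ ω, (μ[(fun ω => ‖g t ω - a t ω‖ ^ 2) | m t]) ω ∂μ
        ≤ ∫ _ω, σ ^ 2 / b ∂μ :=
          integral_mono_ae integrable_condExp (integrable_const _) (hvar t)
      _ = σ ^ 2 / b := by simp
  -- abbreviations
  set I : ℕ → ℝ := fun t => ∫ ω, ‖a t ω‖ ^ 2 ∂μ with hI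
  set J : ℕ → ℝ := fun t => ∫ ω, f (θ t ω) ∂μ with hJ
  set c : ℝ := η * (2 - L * η) / 2 with hc
  set K : ℝ := L * η ^ 2 / 2 * (σ ^ 2 / b) with hK
  have hcpos : 0 < c := by rw [hc]; positivity
  -- one-step inequality
  have hstep : ∀ t, c * I t ≤ J t - J (t + 1) + K := by
    intro t
    simp only [hI, hJ, hc, hK]
    have hpt : ∀ ω, f (θ (t + 1) ω) ≤ f (θ t ω) +
        ((L * η ^ 2 - η) * (inner ℝ (a t ω) (g t ω) : ℝ) +
          (L * η ^ 2 / 2 * ‖g t ω - a t ω‖ ^ 2 - L * η ^ 2 / 2 * ‖a t ω‖ ^ 2)) := by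
      intro ω
      have hd := descent_lemma hL.le f hf hlip (θ t ω) (θ (t + 1) ω)
      have hsub : θ (t + 1) ω - θ t ω = -(η • g t ω) := by
        rw [hupdate t ω]; abel
      rw [hsub] at hd
      have hinner1 : (inner ℝ (gradient f (θ t ω)) (-(η • g t ω)) : ℝ)
          = -(η * inner ℝ (a t ω) (g t ω)) := by
        rw [inner_neg_right, inner_smul_right]
      have hnorm1 : ‖-(η • g t ω)‖ ^ 2 = η ^ 2 * ‖g t ω‖ ^ 2 := by
        rw [norm_neg, norm_smul, mul_pow, Real.norm_eq_abs, sq_abs]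
      rw [hinner1, hnorm1] at hd
      have hnormg : ‖g t ω‖ ^ 2 = ‖g t ω - a t ω‖ ^ 2
          + 2 * (inner ℝ (a t ω) (g t ω) : ℝ) - ‖a t ω‖ ^ 2 := by
        have h1 := norm_sub_sq_real (g t ω) (a t ω)
        have h2 := real_inner_comm (a t ω) (g t ω)
        rw [ha]
        rw [ha] at h1 h2
        linarith
      rw [hnormg] at hd
      rw [ha] at hd ⊢
      nlinarith [hd]
    have hB1 : Integrable (fun ω => (L * η ^ 2 - η) * (inner ℝ (a t ω) (g t ω) : ℝ)) μ :=
      (hinner_int t).const_mul _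
    have hB2 : Integrable (fun ω => L * η ^ 2 / 2 * ‖g t ω - a t ω‖ ^ 2) μ :=
      (hvarint t).const_mul _
    have hB3 : Integrable (fun ω => L * η ^ 2 / 2 * ‖a t ω‖ ^ 2) μ :=
      (hasqint t).const_mul _
    have hB23 : Integrable (fun ω => L * η ^ 2 / 2 * ‖g t ω - a t ω‖ ^ 2
        - L * η ^ 2 / 2 * ‖a t ω‖ ^ 2) μ := hB2.sub hB3
    have hB : Integrable (fun ω => (L * η ^ 2 - η) * (inner ℝ (a t ω) (g t ω) : ℝ) +
        (L * η ^ 2 / 2 * ‖g t ω - a t ω‖ ^ 2 - L * η ^ 2 / 2 * ‖a t ω‖ ^ 2)) μ :=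
      hB1.add hB23
    have h1 : ∫ ω, f (θ (t + 1) ω) ∂μ ≤ ∫ ω, (f (θ t ω) +
        ((L * η ^ 2 - η) * (inner ℝ (a t ω) (g t ω) : ℝ) +
          (L * η ^ 2 / 2 * ‖g t ω - a t ω‖ ^ 2 - L * η ^ 2 / 2 * ‖a t ω‖ ^ 2))) ∂μ :=
      integral_mono (hfint (t + 1)) ((hfint t).add hB) hpt
    have h2 : ∫ ω, (f (θ t ω) +
        ((L * η ^ 2 - η) * (inner ℝ (a t ω) (g t ω) : ℝ) +
          (L * η ^ 2 / 2 * ‖g t ω - a t ω‖ ^ 2 - L * η ^ 2 / 2 * ‖a t ω‖ ^ 2))) ∂μ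
        = (∫ ω, f (θ t ω) ∂μ) + ((L * η ^ 2 - η) * (∫ ω, ‖a t ω‖ ^ 2 ∂μ) +
          (L * η ^ 2 / 2 * (∫ ω, ‖g t ω - a t ω‖ ^ 2 ∂μ)
            - L * η ^ 2 / 2 * (∫ ω, ‖a t ω‖ ^ 2 ∂μ))) := by
      rw [integral_add (hfint t) hB, integral_add hB1 hB23, integral_sub hB2 hB3,
        integral_const_mul, integral_const_mul, integral_const_mul, hEinner t]
    have h3 : L * η ^ 2 / 2 * (∫ ω, ‖g t ω - a t ω‖ ^ 2 ∂μ)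
        ≤ L * η ^ 2 / 2 * (σ ^ 2 / b) := by
      apply mul_le_mul_of_nonneg_left (hEvar t)
      positivity
    rw [h2] at h1
    nlinarith [h1, h3]
  -- telescoping
  have htel : ∀ n : ℕ, c * ∑ t ∈ range n, I t ≤ J 0 - J n + n * K := by
    intro n
    induction n with
    | zero => simp
    | succ n ih =>
      rw [Finset.sum_range_succ, mul_add]
      have := hstep n
      push_cast
      linarith
  have hJ0 : J 0 = f θ0 := by
    simp only [hJ, hθ0]
    simp
  have hJT : fstar ≤ J T := by
    simp only [hJ]
    calc fstar = ∫ _ω, fstar ∂μ := by simp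
      _ ≤ ∫ ω, f (θ T ω) ∂μ :=
        integral_mono (integrable_const _) (hfint T) (fun ω => hfstar _)
  -- min ≤ average
  have hne : (range T).Nonempty := nonempty_range_iff.mpr (by omega)
  set M : ℝ := (range T).inf' hne I with hM
  have hMle : ∀ t ∈ range T, M ≤ I t := fun t ht => Finset.inf'_le _ ht
  have hTM : (T : ℝ) * M ≤ ∑ t ∈ range T, I t := by
    have := Finset.card_nsmul_le_sum (range T) I M hMle
    rwa [Finset.card_range, nsmul_eq_mul] at this
  have hT0 : (0 : ℝ) < T := by
    have : (1 : ℝ) ≤ T := by exact_mod_cast hT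
    linarith
  have hDpos : 0 ≤ f θ0 - fstar := by linarith [hfstar θ0]
  have hfinal : c * ((T : ℝ) * M) ≤ (f θ0 - fstar) + T * K := by
    calc c * ((T : ℝ) * M) ≤ c * ∑ t ∈ range T, I t :=
        mul_le_mul_of_nonneg_left hTM hcpos.le
      _ ≤ J 0 - J T + T * K := htel T
      _ ≤ (f θ0 - fstar) + T * K := by rw [hJ0]; linarith
  have hgoal : M ≤ ((f θ0 - fstar) + T * K) / (c * T) := by
    rw [le_div_iff₀ (by positivity)]
    nlinarith [hfinal]
  have heq : ((f θ0 - fstar) + T * K) / (c * T)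
      = 2 * (f θ0 - fstar) / ((2 - L * η) * η * T) + L * η * σ ^ 2 / ((2 - L * η) * b) := by
    rw [hc, hK]
    field_simp
  rw [heq] at hgoal
  exact hgoal
end

section
/- Let C1, C2, ε > 0 and b* = 2C2/ε². Then the minimal SFO complexity equals N(b*) = 4·C1·C2/ε⁴, and for any b > C2/ε², N(b) ≥ 4·C1·C2/ε⁴. -/
/-! Completing the square: whenever `ε²b ≠ C2`,
`N(b) - 4·C1·C2/ε⁴ = C1·(ε²b - 2·C2)² / (ε⁴·(ε²b - C2))`,
which vanishes at `b = 2·C2/ε²` and is nonnegative when `ε²b > C2`. -/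

section SFOComplexity

variable {C1 C2 ε b : ℝ}

theorem sfo_complexity_sub_min_eq (hε : ε ≠ 0) (hb : ε ^ 2 * b - C2 ≠ 0) :
    C1 * b ^ 2 / (ε ^ 2 * b - C2) - 4 * C1 * C2 / ε ^ 4 =
      C1 * (ε ^ 2 * b - 2 * C2) ^ 2 / (ε ^ 4 * (ε ^ 2 * b - C2)) := by
  rw [div_sub_div _ _ hb (pow_ne_zero 4 hε),
    div_eq_div_iff (mul_ne_zero hb (pow_ne_zero 4 hε)) (mul_ne_zero (pow_ne_zero 4 hε) hb)]
  ring

theorem sfo_complexity_at_critical_batch (hε : ε ≠ 0) (hC2 : C2 ≠ 0) :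
    C1 * (2 * C2 / ε ^ 2) ^ 2 / (ε ^ 2 * (2 * C2 / ε ^ 2) - C2) = 4 * C1 * C2 / ε ^ 4 := by
  have hdenom : ε ^ 2 * (2 * C2 / ε ^ 2) - C2 = C2 := by
    field_simp
    ring
  rw [← sub_eq_zero, sfo_complexity_sub_min_eq hε (hdenom.symm ▸ hC2)]
  field_simp
  ring

theorem min_sfo_complexity_le (hC1 : 0 ≤ C1) (hε : ε ≠ 0) (hb : 0 < ε ^ 2 * b - C2) :
    4 * C1 * C2 / ε ^ 4 ≤ C1 * b ^ 2 / (ε ^ 2 * b - C2) := by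
  rw [← sub_nonneg, sfo_complexity_sub_min_eq hε hb.ne']
  positivity

end SFOComplexity

/-- The minimal SFO complexity: `N(2C2/ε²) = 4·C1·C2/ε⁴`, and `N(b) ≥ 4·C1·C2/ε⁴`
for all `b > C2/ε²`. -/
theorem minimal_sfo_complexity (C1 C2 ε : ℝ) (hC1 : 0 < C1) (hC2 : 0 < C2) (hε : 0 < ε)
    (N : ℝ → ℝ) (hN : ∀ b, N b = C1 * b ^ 2 / (ε ^ 2 * b - C2)) :
    N (2 * C2 / ε ^ 2) = 4 * C1 * C2 / ε ^ 4 ∧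
      ∀ b, C2 / ε ^ 2 < b → 4 * C1 * C2 / ε ^ 4 ≤ N b := by
  refine ⟨?_, fun b hb => ?_⟩
  · rw [hN]
    exact sfo_complexity_at_critical_batch hε.ne' hC2.ne'
  · rw [hN]
    have hdenom : 0 < ε ^ 2 * b - C2 := by
      rw [div_lt_iff₀ (by positivity)] at hb
      linarith
    exact min_sfo_complexity_le hC1.le hε.ne' hdenom
end
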